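/- For every n ≥ 1, the number of ascent sequences of length n avoiding both 021 and 0011 equals (n-1)·2^{n-2} + 1. -/

import Mathlib

open PowerSeries

/-- Number of ascents of a word. -/
def ascN (w : List ℕ) : ℕ := ((w.zip w.tail).filter (fun p => decide (p.1 < p.2))).length

/-- `w` is an ascent sequence. -/
def IsAscentSeq (w : List ℕ) : Prop :=
  (w ≠ [] → w.headD 0 = 0) ∧
  ∀ i, 0 < i → i < w.length → w.getD i 0 ≤ ascN (w.take i) + 1

/-- `w` contains the pattern `τ` (classical pattern containment). -/
def ContainsPat (w τ : List ℕ) : Prop :=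
  ∃ s : List ℕ, s.Sublist w ∧ s.length = τ.length ∧
    ∀ j k, j < τ.length → k < τ.length →
      ((s.getD j 0 < s.getD k 0 ↔ τ.getD j 0 < τ.getD k 0) ∧
       (s.getD j 0 = s.getD k 0 ↔ τ.getD j 0 = τ.getD k 0))

def AvoidsPat (w τ : List ℕ) : Prop := ¬ ContainsPat w τ

/-- Ascent sequences of length `n` avoiding `021` and the pattern `τ`. -/
def BSet (n : ℕ) (τ : List ℕ) : Set (List ℕ) :=
  {w | w.length = n ∧ IsAscentSeq w ∧ AvoidsPat w [0,2,1] ∧ AvoidsPat w τ}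

/-- Staircase word: each letter equals or is one more than the previous. -/
def IsStaircase (w : List ℕ) : Prop := w.Chain' (fun a b => b = a ∨ b = a + 1)

/-- Number of jumps of a nondecreasing word starting with 0. -/
def JumpCount (w : List ℕ) : ℕ := w.foldr max 0 + 1 - w.toFinset.card

/-- Nondecreasing words of length `n` starting with 0 with at most `r` jumps. -/
def NDSet (n r : ℕ) : Set (List ℕ) :=
  {w | w.length = n ∧ w ≠ [] ∧ w.headD 0 = 0 ∧ List.Pairwise (· ≤ ·) w ∧ JumpCount w ≤ r}

lemma ascN_nil : ascN [] = 0 := rfl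
lemma ascN_single (a : ℕ) : ascN [a] = 0 := rfl

lemma ascN_cons_cons (a b : ℕ) (t : List ℕ) :
    ascN (a :: b :: t) = (if a < b then 1 else 0) + ascN (b :: t) := by
  simp only [ascN, List.zip_cons_cons, List.filter_cons]
  split <;> simp_all <;> omega

lemma ascN_append (w : List ℕ) (x : ℕ) (hw : w ≠ []) :
    ascN (w ++ [x]) = ascN w + if w.getD (w.length - 1) 0 < x then 1 else 0 := by
  induction w with
  | nil => simp at hw
  | cons a t ih =>
    cases t with
    | nil => simp [ascN_cons_cons, ascN_single, ascN_nil]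
    | cons b s =>
      have e1 : a :: b :: s ++ [x] = a :: b :: (s ++ [x]) := rfl
      rw [e1, ascN_cons_cons a b (s ++ [x]),
        show b :: (s ++ [x]) = (b :: s) ++ [x] from rfl, ih (by simp), ascN_cons_cons]
      simp only [List.length_cons, List.getD_cons_succ, Nat.add_sub_cancel]
      omega


def maxW (w : List ℕ) : ℕ := w.foldr max 0

lemma foldr_max_eq (b : ℕ) (l : List ℕ) : l.foldr max b = max (l.foldr max 0) b := by
  induction l with
  | nil => simp
  | cons a t ih => simp only [List.foldr_cons, ih]; omega

lemma maxW_append (w : List ℕ) (x : ℕ) : maxW (w ++ [x]) = max (maxW w) x := by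
  simp only [maxW, List.foldr_append, List.foldr_cons, List.foldr_nil]
  rw [foldr_max_eq]; omega

lemma le_maxW {w : List ℕ} {x : ℕ} (h : x ∈ w) : x ≤ maxW w := by
  induction w with
  | nil => simp at h
  | cons a t ih =>
    rcases List.mem_cons.1 h with rfl | h
    · simp only [maxW, List.foldr_cons]; omega
    · have := ih h; simp only [maxW, List.foldr_cons] at *; omega

lemma getD_le_maxW {w : List ℕ} {j : ℕ} (h : j < w.length) : w.getD j 0 ≤ maxW w := by
  rw [List.getD_eq_getElem _ _ h]; exact le_maxW (List.getElem_mem ..)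

lemma maxW_mem {w : List ℕ} (h : maxW w ≠ 0) : maxW w ∈ w := by
  induction w with
  | nil => simp [maxW] at h
  | cons a t ih =>
    by_cases hc : maxW t ≤ a
    · have e : maxW (a::t) = a := by simp only [maxW, List.foldr_cons] at *; omega
      rw [e]; exact List.mem_cons_self
    · have e : maxW (a::t) = maxW t := by simp only [maxW, List.foldr_cons] at *; omega
      rw [e] at h ⊢; exact List.mem_cons_of_mem a (ih h)

lemma maxW_idx {w : List ℕ} (h : maxW w ≠ 0) : ∃ k, k < w.length ∧ w.getD k 0 = maxW w := by
  obtain ⟨n, hn, he⟩ := List.getElem_of_mem (maxW_mem h)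
  exact ⟨n, hn, by rw [List.getD_eq_getElem _ _ hn, he]⟩

lemma headD_getD (w : List ℕ) : w.headD 0 = w.getD 0 0 := by cases w <;> rfl

lemma getD_append_lt {w : List ℕ} {x j : ℕ} (h : j < w.length) :
    (w ++ [x]).getD j 0 = w.getD j 0 := List.getD_append _ _ _ _ h

lemma getD_append_self (w : List ℕ) (x : ℕ) : (w ++ [x]).getD w.length 0 = x := by
  rw [List.getD_append_right _ _ _ _ le_rfl]; simp

lemma take_append_eq {w : List ℕ} {x i : ℕ} (h : i ≤ w.length) :
    (w ++ [x]).take i = w.take i := List.take_append_of_le_length h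

lemma isAscentSeq_append_iff (w : List ℕ) (x : ℕ) (hw : w ≠ []) :
    IsAscentSeq (w ++ [x]) ↔ IsAscentSeq w ∧ x ≤ ascN w + 1 := by
  have hl : 0 < w.length := List.length_pos_iff.2 hw
  have hhead : (w ++ [x]).headD 0 = w.headD 0 := by
    cases w with | nil => simp at hw | cons a t => rfl
  constructor
  · rintro ⟨h0, h⟩
    refine ⟨⟨fun _ => hhead ▸ h0 (by simp), fun i hi hi' => ?_⟩, ?_⟩
    · have := h i hi (by simp; omega)
      rwa [getD_append_lt hi', take_append_eq (le_of_lt hi')] at this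
    · have := h w.length hl (by simp)
      rwa [getD_append_self, take_append_eq le_rfl, List.take_length] at this
  · rintro ⟨⟨h0, h⟩, hx⟩
    refine ⟨fun _ => hhead ▸ h0 hw, fun i hi hi' => ?_⟩
    simp only [List.length_append, List.length_cons, List.length_nil] at hi'
    rcases Nat.lt_or_ge i w.length with h1 | h1
    · rw [getD_append_lt h1, take_append_eq (le_of_lt h1)]
      exact h i hi h1
    · have : i = w.length := by omega
      subst this
      rwa [getD_append_self, take_append_eq le_rfl, List.take_length]

def Mono (w : List ℕ) : Prop :=
  ∀ j k, j < k → k < w.length → w.getD k 0 ≠ 0 → w.getD j 0 ≤ w.getD k 0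

def No11 (w : List ℕ) : Prop :=
  ¬∃ i j k l, i < j ∧ j < k ∧ k < l ∧ l < w.length ∧
    w.getD i 0 = w.getD j 0 ∧ w.getD i 0 < w.getD k 0 ∧ w.getD k 0 = w.getD l 0

def Good (w : List ℕ) : Prop := w ≠ [] ∧ IsAscentSeq w ∧ Mono w ∧ No11 w

lemma good_append_iff (v : List ℕ) (x : ℕ) (hv : v ≠ []) :
    Good (v ++ [x]) ↔ Good v ∧ x ≤ ascN v + 1
      ∧ (x ≠ 0 → ∀ j, j < v.length → v.getD j 0 ≤ x)
      ∧ ¬∃ i j k, i < j ∧ j < k ∧ k < v.length ∧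
          v.getD i 0 = v.getD j 0 ∧ v.getD i 0 < v.getD k 0 ∧ v.getD k 0 = x := by
  have hmono : Mono (v ++ [x]) ↔ Mono v ∧ (x ≠ 0 → ∀ j, j < v.length → v.getD j 0 ≤ x) := by
    constructor
    · intro h
      constructor
      · intro j k hjk hk hk0
        have := h j k hjk (by simp; omega) (by rwa [getD_append_lt hk])
        rwa [getD_append_lt (by omega), getD_append_lt hk] at this
      · intro hx j hj
        have := h j v.length hj (by simp) (by rwa [getD_append_self])
        rwa [getD_append_lt hj, getD_append_self] at this
    · rintro ⟨h1, h2⟩ j k hjk hk hk0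
      simp only [List.length_append, List.length_cons, List.length_nil] at hk
      rcases Nat.lt_or_ge k v.length with h3 | h3
      · rw [getD_append_lt h3] at hk0 ⊢
        rw [getD_append_lt (by omega)]
        exact h1 j k hjk h3 hk0
      · have : k = v.length := by omega
        subst this
        rw [getD_append_self] at hk0 ⊢
        rw [getD_append_lt (by omega)]
        exact h2 hk0 j (by omega)
  have hno11 : No11 (v ++ [x]) ↔ No11 v ∧
      ¬∃ i j k, i < j ∧ j < k ∧ k < v.length ∧
        v.getD i 0 = v.getD j 0 ∧ v.getD i 0 < v.getD k 0 ∧ v.getD k 0 = x := by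
    constructor
    · intro h
      constructor
      · rintro ⟨i, j, k, l, h1, h2, h3, h4, h5, h6, h7⟩
        exact h ⟨i, j, k, l, h1, h2, h3, by simp; omega,
          by rwa [getD_append_lt (by omega), getD_append_lt (by omega)],
          by rwa [getD_append_lt (by omega), getD_append_lt (by omega)],
          by rwa [getD_append_lt (by omega), getD_append_lt h4]⟩
      · rintro ⟨i, j, k, h1, h2, h3, h4, h5, h6⟩
        exact h ⟨i, j, k, v.length, h1, h2, h3, by simp,
          by rwa [getD_append_lt (by omega), getD_append_lt (by omega)],
          by rwa [getD_append_lt (by omega), getD_append_lt h3],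
          by rwa [getD_append_lt h3, getD_append_self]⟩
    · rintro ⟨h1, h2⟩ ⟨i, j, k, l, g1, g2, g3, g4, g5, g6, g7⟩
      simp only [List.length_append, List.length_cons, List.length_nil] at g4
      rcases Nat.lt_or_ge l v.length with h3 | h3
      · exact h1 ⟨i, j, k, l, g1, g2, g3, h3,
          by rwa [getD_append_lt (by omega), getD_append_lt (by omega)] at g5,
          by rwa [getD_append_lt (by omega), getD_append_lt (by omega)] at g6,
          by rwa [getD_append_lt (by omega), getD_append_lt h3] at g7⟩
      · have : l = v.length := by omega
        subst this
        exact h2 ⟨i, j, k, g1, g2, g3,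
          by rwa [getD_append_lt (by omega), getD_append_lt (by omega)] at g5,
          by rwa [getD_append_lt (by omega), getD_append_lt (by omega)] at g6,
          by rwa [getD_append_lt (by omega), getD_append_self] at g7⟩
  constructor
  · rintro ⟨-, ha, hm, hn⟩
    obtain ⟨ha', hx⟩ := (isAscentSeq_append_iff v x hv).1 ha
    obtain ⟨hm1, hm2⟩ := hmono.1 hm
    obtain ⟨hn1, hn2⟩ := hno11.1 hn
    exact ⟨⟨hv, ha', hm1, hn1⟩, hx, hm2, hn2⟩
  · rintro ⟨⟨-, ha, hm, hn⟩, hx, g1, g2⟩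
    exact ⟨by simp, (isAscentSeq_append_iff v x hv).2 ⟨ha, hx⟩,
      hmono.2 ⟨hm, g1⟩, hno11.2 ⟨hn, g2⟩⟩



lemma contains021_iff (w : List ℕ) :
    ContainsPat w [0,2,1] ↔ ∃ i j k, i < j ∧ j < k ∧ k < w.length ∧
      w.getD i 0 < w.getD k 0 ∧ w.getD k 0 < w.getD j 0 := by
  constructor
  · rintro ⟨s, hsub, hlen, hiso⟩
    obtain ⟨is, hmap, hpw⟩ := List.sublist_eq_map_getElem hsub
    have hislen : is.length = 3 := by
      have := congrArg List.length hmap; simp at this; simp [List.length_cons] at hlen; omega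
    obtain ⟨a, b, c, rfl⟩ := List.length_eq_three.1 hislen
    simp only [List.pairwise_cons, List.mem_cons, List.mem_singleton] at hpw
    have hab : (a:ℕ) < b := hpw.1 b (Or.inl rfl)
    have hbc : (b:ℕ) < c := hpw.2.1 c (Or.inl rfl)
    have h02 := (hiso 0 2 (by simp) (by simp)).1
    have h21 := (hiso 2 1 (by simp) (by simp)).1
    subst hmap
    simp only [List.map_cons, List.map_nil, List.getD_cons_zero, List.getD_cons_succ] at h02 h21
    refine ⟨a, b, c, hab, hbc, c.isLt, ?_, ?_⟩
    · rw [List.getD_eq_getElem _ _ a.isLt, List.getD_eq_getElem _ _ c.isLt]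
      exact h02.2 (by norm_num)
    · rw [List.getD_eq_getElem _ _ c.isLt, List.getD_eq_getElem _ _ b.isLt]
      exact h21.2 (by norm_num)
  · rintro ⟨i, j, k, hij, hjk, hk, h1, h2⟩
    have hi : i < w.length := by omega
    have hj : j < w.length := by omega
    refine ⟨[w.getD i 0, w.getD j 0, w.getD k 0], ?_, by simp, ?_⟩
    · have := List.map_getElem_sublist (l := w)
        (is := [⟨i, hi⟩, ⟨j, hj⟩, ⟨k, hk⟩]) (by simp [hij, hjk]; omega)
      simpa [List.getD_eq_getElem, hi, hj, hk] using this
    · intro a b ha hb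
      simp only [List.length_cons, List.length_nil] at ha hb
      interval_cases a <;> interval_cases b <;>
        simp only [List.getD_cons_zero, List.getD_cons_succ] <;>
        constructor <;> constructor <;> intro <;> first | trivial | omega

lemma contains0011_iff (w : List ℕ) :
    ContainsPat w [0,0,1,1] ↔ ∃ i j k l, i < j ∧ j < k ∧ k < l ∧ l < w.length ∧
      w.getD i 0 = w.getD j 0 ∧ w.getD i 0 < w.getD k 0 ∧ w.getD k 0 = w.getD l 0 := by
  constructor
  · rintro ⟨s, hsub, hlen, hiso⟩
    obtain ⟨is, hmap, hpw⟩ := List.sublist_eq_map_getElem hsub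
    have hislen : is.length = 4 := by
      have := congrArg List.length hmap; simp at this; simp [List.length_cons] at hlen; omega
    rcases is with _ | ⟨a, _ | ⟨b, _ | ⟨c, _ | ⟨d, _ | t⟩⟩⟩⟩ <;> simp at hislen
    simp only [List.pairwise_cons, List.mem_cons, List.mem_singleton, List.not_mem_nil] at hpw
    have hab : (a:ℕ) < b := hpw.1 b (Or.inl rfl)
    have hbc : (b:ℕ) < c := hpw.2.1 c (Or.inl rfl)
    have hcd : (c:ℕ) < d := hpw.2.2.1 d (Or.inl rfl)
    have h01 := (hiso 0 1 (by simp) (by simp)).2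
    have h02 := (hiso 0 2 (by simp) (by simp)).1
    have h23 := (hiso 2 3 (by simp) (by simp)).2
    subst hmap
    simp only [List.map_cons, List.map_nil, List.getD_cons_zero, List.getD_cons_succ] at h01 h02 h23
    refine ⟨a, b, c, d, hab, hbc, hcd, d.isLt, ?_, ?_, ?_⟩
    · rw [List.getD_eq_getElem _ _ a.isLt, List.getD_eq_getElem _ _ b.isLt]
      exact h01.2 trivial
    · rw [List.getD_eq_getElem _ _ a.isLt, List.getD_eq_getElem _ _ c.isLt]
      exact h02.2 (by norm_num)
    · rw [List.getD_eq_getElem _ _ c.isLt, List.getD_eq_getElem _ _ d.isLt]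
      exact h23.2 trivial
  · rintro ⟨i, j, k, l, hij, hjk, hkl, hl, h1, h2, h3⟩
    have hi : i < w.length := by omega
    have hj : j < w.length := by omega
    have hk : k < w.length := by omega
    refine ⟨[w.getD i 0, w.getD j 0, w.getD k 0, w.getD l 0], ?_, by simp, ?_⟩
    · have := List.map_getElem_sublist (l := w)
        (is := [⟨i, hi⟩, ⟨j, hj⟩, ⟨k, hk⟩, ⟨l, hl⟩]) (by simp [hij, hjk, hkl]; omega)
      simpa [List.getD_eq_getElem, hi, hj, hk, hl] using this
    · intro a b ha hb
      simp only [List.length_cons, List.length_nil] at ha hb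
      interval_cases a <;> interval_cases b <;>
        simp only [List.getD_cons_zero, List.getD_cons_succ] <;>
        constructor <;> constructor <;> intro <;> first | trivial | omega

-- LAYER4PRE

def Gs (n : ℕ) : Set (List ℕ) := {w | Good w ∧ w.length = n}
def As (n : ℕ) : Set (List ℕ) := {w | w ∈ Gs n ∧ 1 ≤ ascN w ∧ Good (w ++ [ascN w])}

lemma good_zero : Good [0] := by
  refine ⟨by simp, ⟨fun _ => rfl, fun i hi hi' => by simp at hi'; omega⟩, ?_, ?_⟩
  · intro j k hjk hk; simp at hk; omega
  · rintro ⟨i, j, k, l, h1, h2, h3, h4, -⟩; simp at h4; omega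

lemma good_head {w : List ℕ} (hw : Good w) : w.getD 0 0 = 0 := by
  rw [← headD_getD]; exact hw.2.1.1 hw.1

lemma lastD_le_maxW {w : List ℕ} (hw : w ≠ []) : w.getD (w.length - 1) 0 ≤ maxW w :=
  getD_le_maxW (by have := List.length_pos_iff.2 hw; omega)

lemma maxW_le_of_mono {w : List ℕ} {x : ℕ} (h : ∀ j, j < w.length → w.getD j 0 ≤ x) :
    maxW w ≤ x := by
  by_cases h0 : maxW w = 0
  · omega
  · obtain ⟨k, hk, he⟩ := maxW_idx h0
    exact he ▸ h k hk

lemma maxW_zero_ascN {w : List ℕ} (h : maxW w = 0) : ascN w = 0 := by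
  simp only [ascN, List.length_eq_zero_iff, List.filter_eq_nil_iff]
  intro p hp
  have h2 : p.2 ∈ w := List.mem_of_mem_tail (List.of_mem_zip hp).2
  have := le_maxW h2
  simp; omega

/-- The invariant statement. -/
def WInv (w : List ℕ) : Prop :=
  maxW w ≤ ascN w ∧ ascN w ≤ maxW w + 1 ∧
    (ascN w = maxW w + 1 → 1 ≤ maxW w → ¬ Good (w ++ [maxW w]))

lemma ext_classify {v : List ℕ} {x : ℕ} (hv : Good v) (hiv : WInv v)
    (hgx : Good (v ++ [x])) : x = 0 ∨ x = ascN v ∨ x = ascN v + 1 := by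
  obtain ⟨-, hle, hmono, -⟩ := (good_append_iff v x hv.1).1 hgx
  by_cases hx0 : x = 0
  · exact Or.inl hx0
  have hm : maxW v ≤ x := maxW_le_of_mono (hmono hx0)
  obtain ⟨h1, h2, h3⟩ := hiv
  rcases Nat.eq_or_lt_of_le h1 with he | hlt
  · omega
  · -- ascN v = maxW v + 1
    have ha : ascN v = maxW v + 1 := by omega
    by_cases hxm : x = maxW v
    · exfalso; exact h3 ha (by omega) (hxm ▸ hgx)
    · omega

lemma good_inv : ∀ n (w : List ℕ), w.length = n → Good w → WInv w := by
  intro n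
  induction n using Nat.strong_induction_on with
  | _ n ih =>
    intro w hlen hw
    have hne : w ≠ [] := hw.1
    have hpos : 0 < w.length := List.length_pos_iff.2 hne
    rcases Nat.lt_or_ge n 2 with h2 | h2
    · have h1 : w.length = 1 := by omega
      obtain ⟨y, rfl⟩ := List.length_eq_one_iff.1 h1
      have : y = 0 := by have := good_head hw; simpa using this
      subst this
      refine ⟨by simp [maxW, ascN_single], by simp [maxW, ascN_single], ?_⟩
      intro h _; simp [maxW, ascN_single] at h
    · obtain ⟨v, x, rfl⟩ : ∃ v x, w = v ++ [x] :=
        ⟨w.dropLast, w.getLast hne, (List.dropLast_append_getLast hne).symm⟩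
      have hvlen : v.length = n - 1 := by
        simp only [List.length_append, List.length_cons, List.length_nil] at hlen; omega
      have hvne : v ≠ [] := by
        intro h; rw [h] at hvlen; simp at hvlen; omega
      obtain ⟨hgv, hxle, hmono, htri⟩ := (good_append_iff v x hvne).1 hw
      have hiv : WInv v := ih (n-1) (by omega) v hvlen hgv
      obtain ⟨i1, i2, i3⟩ := hiv
      have hcl := ext_classify hgv ⟨i1, i2, i3⟩ hw
      have hlast : v.getD (v.length - 1) 0 ≤ maxW v := lastD_le_maxW hvne
      have hasc : ascN (v ++ [x]) = ascN v + if v.getD (v.length - 1) 0 < x then 1 else 0 :=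
        ascN_append v x hvne
      have hmax : maxW (v ++ [x]) = max (maxW v) x := maxW_append v x
      have case0 : x = 0 → WInv (v ++ [x]) := by
        intro h0
        subst h0
        have hasc0 : ascN (v ++ [0]) = ascN v := by rw [hasc, if_neg (by omega)]; omega
        have hmax0 : maxW (v ++ [0]) = maxW v := by rw [hmax]; omega
        refine ⟨by omega, by omega, ?_⟩
        intro e1 e2 hG
        rw [hasc0, hmax0] at e1
        rw [hmax0] at e2
        rw [hmax0] at hG
        obtain ⟨-, hle', hmono', htri'⟩ := (good_append_iff (v ++ [0]) (maxW v) (by simp)).1 hG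
        have hgood : Good (v ++ [maxW v]) := by
          rw [good_append_iff v (maxW v) hvne]
          refine ⟨hgv, by omega, ?_, ?_⟩
          · intro hm0 j hj
            have := hmono' hm0 j (by simp; omega)
            rwa [getD_append_lt hj] at this
          · rintro ⟨i, j, k, g1, g2, g3, g4, g5, g6⟩
            exact htri' ⟨i, j, k, g1, g2, by simp; omega,
              by rwa [getD_append_lt (by omega), getD_append_lt (by omega)],
              by rwa [getD_append_lt (by omega), getD_append_lt (by omega)],
              by rwa [getD_append_lt (by omega)]⟩
        exact i3 e1 e2 hgood
      rcases hcl with h0 | h0 | h0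
      · exact case0 h0
      · by_cases ha0 : ascN v = 0
        · exact case0 (by omega)
        have hm1 : 1 ≤ maxW v := by
          by_contra hc
          have := maxW_zero_ascN (w := v) (by omega)
          omega
        subst h0
        rcases Nat.lt_or_ge (v.getD (v.length - 1) 0) (ascN v) with hrise | hnorise
        · have hasc1 : ascN (v ++ [ascN v]) = ascN v + 1 := by rw [hasc, if_pos hrise]
          have hmax1 : maxW (v ++ [ascN v]) = ascN v := by rw [hmax]; omega
          refine ⟨by omega, by omega, ?_⟩
          intro _ _ hG
          rw [hmax1] at hG
          obtain ⟨-, -, -, htri''⟩ := (good_append_iff (v ++ [ascN v]) (ascN v) (by simp)).1 hG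
          rcases Nat.eq_or_lt_of_le i2 with hcase | hcase
          · -- ascN v = maxW v (since ascN v ≤ maxW v + 1 with equality excluded below)
            -- here hcase : ascN v = maxW v + 1
            have hnm := i3 (by omega) hm1
            have hns : ¬¬∃ i j k, i < j ∧ j < k ∧ k < v.length ∧
                v.getD i 0 = v.getD j 0 ∧ v.getD i 0 < v.getD k 0 ∧ v.getD k 0 = maxW v := by
              intro hns
              exact hnm ((good_append_iff v (maxW v) hvne).2
                ⟨hgv, by omega, fun _ j hj => getD_le_maxW hj, hns⟩)
            obtain ⟨i', j', k', g1, g2, g3, g4, g5, g6⟩ := not_not.1 hns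
            refine htri'' ⟨i', j', v.length, g1, by omega, by simp, ?_, ?_, ?_⟩
            · rw [getD_append_lt (by omega), getD_append_lt (by omega)]; exact g4
            · rw [getD_append_lt (by omega), getD_append_self]; omega
            · rw [getD_append_self]
          · -- ascN v = maxW v, last < ascN v so last = 0
            have hlast0 : v.getD (v.length - 1) 0 = 0 := by
              by_contra hc
              obtain ⟨k', hk', he'⟩ := maxW_idx (w := v) (by omega)
              have hkne : k' ≠ v.length - 1 := by
                intro h; rw [h] at he'; omega
              have := hgv.2.2.1 k' (v.length - 1) (by omega) (by omega) hc
              omega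
            have hv2 : 2 ≤ v.length := by
              by_contra hc
              have h1 : v.length = 1 := by omega
              obtain ⟨k', hk', he'⟩ := maxW_idx (w := v) (by omega)
              have : k' = 0 := by omega
              subst this
              have := good_head hgv
              omega
            refine htri'' ⟨0, v.length - 1, v.length, by omega, by omega, by simp, ?_, ?_, ?_⟩
            · rw [getD_append_lt (by omega), getD_append_lt (by omega)]
              rw [good_head hgv, hlast0]
            · rw [getD_append_lt (by omega), getD_append_self]
              rw [good_head hgv]; omega
            · rw [getD_append_self]
        · have hle : v.getD (v.length - 1) 0 = ascN v := by omega
          have hasc1 : ascN (v ++ [ascN v]) = ascN v := by rw [hasc, if_neg (by omega)]; omega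
          have hmax1 : maxW (v ++ [ascN v]) = maxW v := by rw [hmax]; omega
          refine ⟨by omega, by omega, ?_⟩
          intro e1 _
          omega
      · subst h0
        have hrise : v.getD (v.length - 1) 0 < ascN v + 1 := by omega
        have hasc1 : ascN (v ++ [ascN v + 1]) = ascN v + 1 := by rw [hasc, if_pos hrise]
        have hmax1 : maxW (v ++ [ascN v + 1]) = ascN v + 1 := by rw [hmax]; omega
        refine ⟨by omega, by omega, ?_⟩
        intro e1 _
        omega

lemma good_inv' {w : List ℕ} (hw : Good w) : WInv w := good_inv w.length w rfl hw

lemma good_append_zero {w : List ℕ} (hw : Good w) : Good (w ++ [0]) := by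
  rw [good_append_iff w 0 hw.1]
  refine ⟨hw, by omega, by omega, ?_⟩
  rintro ⟨i, j, k, -, -, -, -, g5, g6⟩
  omega

lemma good_append_top {w : List ℕ} (hw : Good w) : Good (w ++ [ascN w + 1]) := by
  obtain ⟨i1, i2, i3⟩ := good_inv' hw
  rw [good_append_iff w _ hw.1]
  refine ⟨hw, by omega, ?_, ?_⟩
  · intro _ j hj
    have := getD_le_maxW hj
    omega
  · rintro ⟨i, j, k, -, -, g3, -, -, g6⟩
    have := getD_le_maxW g3
    omega

lemma good_classify {w : List ℕ} {x : ℕ} (hw : Good w) (hgx : Good (w ++ [x])) :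
    x = 0 ∨ x = ascN w ∨ x = ascN w + 1 :=
  ext_classify hw (good_inv' hw) hgx

-- LAYER4

lemma stair_getD {n i : ℕ} (h : i < n) : (List.range n).getD i 0 = i := by
  rw [List.getD_eq_getElem _ _ (by simpa using h)]; simp

lemma ascN_stair (n : ℕ) : ascN (List.range (n+1)) = n := by
  induction n with
  | zero => rfl
  | succ k ih =>
    rw [List.range_succ, ascN_append _ _ (by simp), ih]
    have he : (List.range (k+1)).getD ((List.range (k+1)).length - 1) 0 = k := by
      rw [List.length_range]; exact stair_getD (by omega)
    rw [he, if_pos (by omega)]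

lemma good_stair (n : ℕ) : Good (List.range (n+1)) := by
  induction n with
  | zero => exact good_zero
  | succ k ih =>
    rw [List.range_succ]
    have := good_append_top ih
    rwa [ascN_stair] at this

lemma stair_alive (n : ℕ) : List.range (n+2) ∈ As (n+2) := by
  refine ⟨⟨good_stair (n+1), by simp⟩, ?_, ?_⟩
  · rw [ascN_stair]; omega
  · rw [ascN_stair, good_append_iff _ _ (by simp)]
    refine ⟨good_stair _, by rw [ascN_stair]; omega, ?_, ?_⟩
    · intro _ j hj
      rw [List.length_range] at hj
      rw [stair_getD hj]; omega
    · rintro ⟨i, j, k, g1, g2, g3, g4, -, -⟩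
      rw [List.length_range] at g3
      rw [stair_getD (by omega), stair_getD (by omega)] at g4
      omega

lemma eq_stair_of_double_top {w : List ℕ} (hw : Good w)
    (hG : Good (w ++ [ascN w + 1] ++ [ascN w + 1])) : w = List.range w.length := by
  obtain ⟨i1, i2, i3⟩ := good_inv' hw
  have hnr : ∀ i j, i < j → j < w.length → w.getD i 0 ≠ w.getD j 0 := by
    intro i j hij hj heq
    obtain ⟨-, -, -, htri⟩ := (good_append_iff (w ++ [ascN w + 1]) (ascN w + 1) (by simp)).1 hG
    refine htri ⟨i, j, w.length, hij, by omega, by simp, ?_, ?_, ?_⟩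
    · rw [getD_append_lt (by omega), getD_append_lt (by omega)]; exact heq
    · rw [getD_append_lt (by omega), getD_append_self]
      have := getD_le_maxW (w := w) (j := i) (by omega); omega
    · rw [getD_append_self]
  have key : ∀ i, i < w.length → w.getD i 0 = i := by
    intro i
    induction i using Nat.strong_induction_on with
    | _ i ihh =>
      intro hi
      rcases Nat.eq_zero_or_pos i with rfl | hip
      · exact good_head hw
      · have hlb : i ≤ w.getD i 0 := by
          by_contra hc
          have h1 : w.getD i 0 < i := by omega
          have := ihh (w.getD i 0) h1 (by omega)
          exact hnr (w.getD i 0) i h1 hi this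
        have htake : w.take i = List.range i := by
          apply List.ext_getElem
          · simp; omega
          · intro j h1 h2
            rw [List.getElem_take]
            rw [List.getElem_range]
            have hjl : j < i := by simpa using h2
            have := ihh j hjl (by omega)
            rwa [List.getD_eq_getElem _ _ (by omega)] at this
        have hub := hw.2.1.2 i hip hi
        rw [htake] at hub
        obtain ⟨k, rfl⟩ : ∃ k, i = k + 1 := ⟨i - 1, by omega⟩
        rw [ascN_stair] at hub
        omega
  apply List.ext_getElem (by simp)
  intro i h1 h2
  have := key i h1
  rw [List.getD_eq_getElem _ _ h1] at this
  simpa using this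

-- LAYER4C

lemma ascN_append_zero {w : List ℕ} (hw : w ≠ []) : ascN (w ++ [0]) = ascN w := by
  rw [ascN_append w 0 hw, if_neg (by omega)]; omega

lemma alive_of_zero {w : List ℕ} (hgw : Good w) (ha : 1 ≤ ascN w)
    (h : Good (w ++ [0] ++ [ascN w])) : Good (w ++ [ascN w]) := by
  obtain ⟨-, -, hmono', htri'⟩ := (good_append_iff (w ++ [0]) (ascN w) (by simp)).1 h
  rw [good_append_iff w _ hgw.1]
  refine ⟨hgw, by omega, ?_, ?_⟩
  · intro hx j hj
    have := hmono' hx j (by simp; omega)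
    rwa [getD_append_lt hj] at this
  · rintro ⟨i, j, k, g1, g2, g3, g4, g5, g6⟩
    exact htri' ⟨i, j, k, g1, g2, by simp; omega,
      by rwa [getD_append_lt (by omega), getD_append_lt (by omega)],
      by rwa [getD_append_lt (by omega), getD_append_lt (by omega)],
      by rwa [getD_append_lt (by omega)]⟩

lemma alive_append_zero {n : ℕ} {w : List ℕ} (hw : w ∈ As n) : w ++ [0] ∈ As (n+1) := by
  obtain ⟨⟨hgw, hlen⟩, ha, hG⟩ := hw
  have hne := hgw.1
  obtain ⟨-, -, hmono0, htri0⟩ := (good_append_iff w (ascN w) hne).1 hG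
  have hasc : ascN (w ++ [0]) = ascN w := ascN_append_zero hne
  refine ⟨⟨good_append_zero hgw, by simp [hlen]⟩, by omega, ?_⟩
  rw [hasc, good_append_iff (w ++ [0]) _ (by simp)]
  refine ⟨good_append_zero hgw, by rw [hasc]; omega, ?_, ?_⟩
  · intro hx j hj
    simp only [List.length_append, List.length_cons, List.length_nil] at hj
    rcases Nat.lt_or_ge j w.length with h1 | h1
    · rw [getD_append_lt h1]; exact hmono0 hx j h1
    · have : j = w.length := by omega
      subst this
      rw [getD_append_self]; omega
  · rintro ⟨i, j, k, g1, g2, g3, g4, g5, g6⟩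
    simp only [List.length_append, List.length_cons, List.length_nil] at g3
    rcases Nat.lt_or_ge k w.length with h1 | h1
    · exact htri0 ⟨i, j, k, g1, g2, h1,
        by rwa [getD_append_lt (by omega), getD_append_lt (by omega)] at g4,
        by rwa [getD_append_lt (by omega), getD_append_lt (by omega)] at g5,
        by rwa [getD_append_lt h1] at g6⟩
    · have : k = w.length := by omega
      subst this
      rw [getD_append_self] at g6
      omega

lemma alive_append_asc {n : ℕ} {w : List ℕ} (hw : w ∈ As n) : w ++ [ascN w] ∈ As (n+1) := by
  obtain ⟨⟨hgw, hlen⟩, ha, hG⟩ := hw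
  have hne := hgw.1
  have hpos : 0 < w.length := List.length_pos_iff.2 hne
  obtain ⟨i1, i2, i3⟩ := good_inv' hgw
  obtain ⟨-, -, hmono0, htri0⟩ := (good_append_iff w (ascN w) hne).1 hG
  have hlast : w.getD (w.length - 1) 0 ≤ maxW w := lastD_le_maxW hne
  have hasc : ascN (w ++ [ascN w]) =
      ascN w + if w.getD (w.length - 1) 0 < ascN w then 1 else 0 := ascN_append w _ hne
  have hmaxu : maxW (w ++ [ascN w]) = ascN w := by rw [maxW_append]; omega
  have hulen : (w ++ [ascN w]).length = w.length + 1 := by simp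
  refine ⟨⟨hG, by simp [hlen]⟩, by omega, ?_⟩
  rcases Nat.lt_or_ge (w.getD (w.length - 1) 0) (ascN w) with hrise | hnorise
  · -- rise : new asc = ascN w + 1 > everything
    have ha1 : ascN (w ++ [ascN w]) = ascN w + 1 := by rw [hasc, if_pos hrise]
    rw [ha1, good_append_iff _ _ (by simp)]
    refine ⟨hG, by omega, ?_, ?_⟩
    · intro _ j hj
      have := getD_le_maxW (w := w ++ [ascN w]) (j := j) hj
      omega
    · rintro ⟨i, j, k, -, -, g3, -, -, g6⟩
      have := getD_le_maxW (w := w ++ [ascN w]) (j := k) g3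
      omega
  · -- no rise : last letter = ascN w = maxW w
    have hl : w.getD (w.length - 1) 0 = ascN w := by omega
    have ha1 : ascN (w ++ [ascN w]) = ascN w := by rw [hasc, if_neg (by omega)]; omega
    rw [ha1, good_append_iff _ _ (by simp)]
    refine ⟨hG, by omega, ?_, ?_⟩
    · intro _ j hj
      have := getD_le_maxW (w := w ++ [ascN w]) (j := j) hj
      omega
    · rintro ⟨i, j, k, g1, g2, g3, g4, g5, g6⟩
      rw [hulen] at g3
      rcases Nat.lt_or_ge k w.length with h1 | h1
      · exact htri0 ⟨i, j, k, g1, g2, h1,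
          by rwa [getD_append_lt (by omega), getD_append_lt (by omega)] at g4,
          by rwa [getD_append_lt (by omega), getD_append_lt (by omega)] at g5,
          by rwa [getD_append_lt h1] at g6⟩
      · have hk : k = w.length := by omega
        subst hk
        rw [getD_append_self] at g6
        rw [getD_append_lt (by omega), getD_append_lt (by omega)] at g4
        rw [getD_append_lt (by omega), getD_append_self] at g5
        rcases Nat.lt_or_ge j (w.length - 1) with h2 | h2
        · exact htri0 ⟨i, j, w.length - 1, g1, h2, by omega, g4, by omega, by omega⟩
        · have hj : j = w.length - 1 := by omega
          subst hj
          rw [hl] at g4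
          omega

lemma Gs_succ (n : ℕ) (hn : 1 ≤ n) :
    Gs (n+1) = ((fun w => w ++ [0]) '' Gs n ∪ (fun w => w ++ [ascN w + 1]) '' Gs n) ∪
      (fun w => w ++ [ascN w]) '' As n := by
  ext u; constructor
  · rintro ⟨hgu, hlen⟩
    have hne := hgu.1
    obtain ⟨v, x, rfl⟩ : ∃ v x, u = v ++ [x] :=
      ⟨u.dropLast, u.getLast hne, (List.dropLast_append_getLast hne).symm⟩
    have hvlen : v.length = n := by
      simp only [List.length_append, List.length_cons, List.length_nil] at hlen; omega
    have hvne : v ≠ [] := by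
      intro h; rw [h] at hvlen; simp at hvlen; omega
    have hgv : Good v := ((good_append_iff v x hvne).1 hgu).1
    rcases good_classify hgv hgu with rfl | rfl | rfl
    · exact Or.inl (Or.inl ⟨v, ⟨hgv, hvlen⟩, rfl⟩)
    · by_cases h0 : ascN v = 0
      · exact Or.inl (Or.inl ⟨v, ⟨hgv, hvlen⟩, by rw [h0]⟩)
      · exact Or.inr ⟨v, ⟨⟨hgv, hvlen⟩, by omega, hgu⟩, rfl⟩
    · exact Or.inl (Or.inr ⟨v, ⟨hgv, hvlen⟩, rfl⟩)
  · rintro ((⟨v, ⟨hgv, hvlen⟩, rfl⟩ | ⟨v, ⟨hgv, hvlen⟩, rfl⟩) | ⟨v, ⟨⟨hgv, hvlen⟩, ha, hG⟩, rfl⟩)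
    · exact ⟨good_append_zero hgv, by simp [hvlen]⟩
    · exact ⟨good_append_top hgv, by simp [hvlen]⟩
    · exact ⟨hG, by simp [hvlen]⟩

lemma As_succ (n : ℕ) (hn : 1 ≤ n) :
    As (n+1) = ((fun w => w ++ [0]) '' As n ∪ (fun w => w ++ [ascN w]) '' As n) ∪
      {List.range (n+1)} := by
  ext u; constructor
  · rintro ⟨⟨hgu, hlen⟩, hau, hGu⟩
    have hne := hgu.1
    obtain ⟨v, x, rfl⟩ : ∃ v x, u = v ++ [x] :=
      ⟨u.dropLast, u.getLast hne, (List.dropLast_append_getLast hne).symm⟩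
    have hvlen : v.length = n := by
      simp only [List.length_append, List.length_cons, List.length_nil] at hlen; omega
    have hvne : v ≠ [] := by
      intro h; rw [h] at hvlen; simp at hvlen; omega
    have hvpos : 0 < v.length := List.length_pos_iff.2 hvne
    have hgv : Good v := ((good_append_iff v x hvne).1 hgu).1
    obtain ⟨i1, i2, i3⟩ := good_inv' hgv
    have hlast : v.getD (v.length - 1) 0 ≤ maxW v := lastD_le_maxW hvne
    have case0 : x = 0 → (v ++ [x]) ∈
        ((fun w => w ++ [0]) '' As n ∪ (fun w => w ++ [ascN w]) '' As n) ∪ {List.range (n+1)} := by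
      intro h0; subst h0
      have hasc : ascN (v ++ [0]) = ascN v := ascN_append_zero hvne
      rw [hasc] at hau hGu
      exact Or.inl (Or.inl ⟨v, ⟨⟨hgv, hvlen⟩, hau, alive_of_zero hgv hau hGu⟩, rfl⟩)
    rcases good_classify hgv hgu with rfl | rfl | rfl
    · exact case0 rfl
    · by_cases h0 : ascN v = 0
      · exact case0 (by omega)
      · exact Or.inl (Or.inr ⟨v, ⟨⟨hgv, hvlen⟩, by omega, hgu⟩, rfl⟩)
    · -- x = ascN v + 1 : u must be the staircase
      have hrise : v.getD (v.length - 1) 0 < ascN v + 1 := by omega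
      have hasc : ascN (v ++ [ascN v + 1]) = ascN v + 1 := by
        rw [ascN_append v _ hvne, if_pos hrise]
      rw [hasc] at hGu
      have hst := eq_stair_of_double_top hgv hGu
      rw [hvlen] at hst
      have hav : ascN v = n - 1 := by
        rw [hst]
        obtain ⟨k, rfl⟩ : ∃ k, n = k + 1 := ⟨n - 1, by omega⟩
        rw [ascN_stair]; omega
      right
      have : ascN v + 1 = n := by omega
      rw [this, hst, ← List.range_succ]
      rfl
  · rintro ((⟨v, hv, rfl⟩ | ⟨v, hv, rfl⟩) | h)
    · exact alive_append_zero hv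
    · exact alive_append_asc hv
    · have hu : u = List.range (n+1) := h
      subst hu
      obtain ⟨k, rfl⟩ : ∃ k, n = k + 1 := ⟨n - 1, by omega⟩
      exact stair_alive k

-- LAYER4D

lemma Gs_one : Gs 1 = {[0]} := by
  ext w
  constructor
  · rintro ⟨hg, hlen⟩
    obtain ⟨y, rfl⟩ := List.length_eq_one_iff.1 hlen
    have := good_head hg
    simp at this
    subst this; rfl
  · rintro rfl
    exact ⟨good_zero, rfl⟩

lemma As_one : As 1 = ∅ := by
  ext w
  simp only [Set.mem_empty_iff_false, iff_false]
  rintro ⟨hg, ha, -⟩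
  rw [Gs_one] at hg
  simp only [Set.mem_singleton_iff] at hg
  subst hg
  simp [ascN_single] at ha

lemma As_subset_Gs (n : ℕ) : As n ⊆ Gs n := fun _ hx => hx.1

lemma Gs_finite : ∀ n, (Gs n).Finite := by
  intro n
  induction n with
  | zero =>
    convert Set.finite_empty
    ext w
    simp only [Set.mem_empty_iff_false, iff_false]
    rintro ⟨hg, hlen⟩
    exact hg.1 (List.length_eq_zero_iff.1 hlen)
  | succ k ih =>
    rcases Nat.eq_zero_or_pos k with rfl | hk
    · rw [Gs_one]; exact Set.finite_singleton _
    · rw [Gs_succ k hk]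
      exact ((ih.image _).union (ih.image _)).union ((ih.subset (As_subset_Gs k)).image _)

lemma As_finite (n : ℕ) : (As n).Finite := (Gs_finite n).subset (As_subset_Gs n)

lemma concat_injective {v v' : List ℕ} {x x' : ℕ} (h : v ++ [x] = v' ++ [x']) :
    v = v' ∧ x = x' := by
  obtain ⟨h1, h2⟩ := List.append_inj' h rfl
  exact ⟨h1, by simpa using h2⟩

lemma As_card : ∀ n, 1 ≤ n → (As n).ncard = 2^(n-1) - 1 := by
  intro n
  induction n with
  | zero => omega
  | succ k ih =>
    intro _
    rcases Nat.eq_zero_or_pos k with rfl | hk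
    · rw [As_one]; simp
    · rw [As_succ k hk]
      have hfin0 : ((fun w => w ++ [0]) '' As k).Finite := (As_finite k).image _
      have hfinA : ((fun w => w ++ [ascN w]) '' As k).Finite := (As_finite k).image _
      have hd1 : Disjoint ((fun w => w ++ [0]) '' As k) ((fun w => w ++ [ascN w]) '' As k) := by
        rw [Set.disjoint_left]
        rintro u ⟨v, hv, rfl⟩ ⟨v', hv', he⟩
        obtain ⟨rfl, h2⟩ := concat_injective he
        have := hv'.2.1
        omega
      have hd2 : Disjoint (((fun w => w ++ [0]) '' As k) ∪ ((fun w => w ++ [ascN w]) '' As k))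
          ({List.range (k+1)} : Set (List ℕ)) := by
        rw [Set.disjoint_right]
        rintro u hu h2
        simp only [Set.mem_singleton_iff] at hu
        subst hu
        rw [List.range_succ] at h2
        rcases h2 with ⟨v, hv, he⟩ | ⟨v, hv, he⟩
        · obtain ⟨rfl, h3⟩ := concat_injective he
          omega
        · obtain ⟨rfl, h3⟩ := concat_injective he
          have : ascN (List.range k) = k - 1 := by
            obtain ⟨m, rfl⟩ : ∃ m, k = m + 1 := ⟨k - 1, by omega⟩
            rw [ascN_stair]; omega
          omega
      rw [Set.ncard_union_eq hd2 (hfin0.union hfinA) (Set.finite_singleton _),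
        Set.ncard_union_eq hd1 hfin0 hfinA,
        Set.ncard_image_of_injOn (fun a _ b _ h => (concat_injective h).1),
        Set.ncard_image_of_injOn (fun a _ b _ h => (concat_injective h).1),
        Set.ncard_singleton, ih hk]
      have h1 : 1 ≤ 2^(k-1) := Nat.one_le_two_pow
      obtain ⟨m, rfl⟩ : ∃ m, k = m + 1 := ⟨k - 1, by omega⟩
      simp only [Nat.add_sub_cancel]
      have h2 : 2^(m+1) = 2 * 2^m := by ring
      simp only [Nat.add_sub_cancel] at h1
      omega

lemma Gs_card : ∀ n, 1 ≤ n → (Gs n).ncard = (n-1) * 2^(n-2) + 1 := by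
  intro n
  induction n with
  | zero => omega
  | succ k ih =>
    intro _
    rcases Nat.eq_zero_or_pos k with rfl | hk
    · rw [Gs_one]; simp
    · rw [Gs_succ k hk]
      have hfin0 : ((fun w => w ++ [0]) '' Gs k).Finite := (Gs_finite k).image _
      have hfinT : ((fun w => w ++ [ascN w + 1]) '' Gs k).Finite := (Gs_finite k).image _
      have hfinA : ((fun w => w ++ [ascN w]) '' As k).Finite := (As_finite k).image _
      have hd1 : Disjoint ((fun w => w ++ [0]) '' Gs k) ((fun w => w ++ [ascN w + 1]) '' Gs k) := by
        rw [Set.disjoint_left]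
        rintro u ⟨v, hv, rfl⟩ ⟨v', hv', he⟩
        obtain ⟨rfl, h2⟩ := concat_injective he
        omega
      have hd2 : Disjoint (((fun w => w ++ [0]) '' Gs k) ∪ ((fun w => w ++ [ascN w + 1]) '' Gs k))
          ((fun w => w ++ [ascN w]) '' As k) := by
        rw [Set.disjoint_right]
        rintro u ⟨v, hv, rfl⟩ h2
        rcases h2 with ⟨v', hv', he⟩ | ⟨v', hv', he⟩
        · obtain ⟨rfl, h3⟩ := concat_injective he
          have := hv.2.1
          omega
        · obtain ⟨rfl, h3⟩ := concat_injective he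
          omega
      rw [Set.ncard_union_eq hd2 (hfin0.union hfinT) hfinA,
        Set.ncard_union_eq hd1 hfin0 hfinT,
        Set.ncard_image_of_injOn (fun a _ b _ h => (concat_injective h).1),
        Set.ncard_image_of_injOn (fun a _ b _ h => (concat_injective h).1),
        Set.ncard_image_of_injOn (fun a _ b _ h => (concat_injective h).1),
        ih hk, As_card k hk]
      rcases Nat.eq_zero_or_pos (k-1) with h1 | h1
      · have : k = 1 := by omega
        subst this
        rfl
      · obtain ⟨m, rfl⟩ : ∃ m, k = m + 2 := ⟨k - 2, by omega⟩
        have em1 : m + 2 - 1 = m + 1 := by omega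
        have em2 : m + 2 - 2 = m := by omega
        have em3 : m + 2 + 1 - 1 = m + 2 := by omega
        have em4 : m + 2 + 1 - 2 = m + 1 := by omega
        rw [em1, em2, em3, em4]
        have h2 : 2^(m+1) = 2 * 2^m := by ring
        have h3 : 1 ≤ 2^m := Nat.one_le_two_pow
        have h4 : (m+2) * 2^(m+1) = (m+1) * 2^m + (m+3) * 2^m := by rw [h2]; ring
        have h5 : (m+3) * 2^m = (m+1) * 2^m + 2 * 2^m := by ring
        omega

lemma bset_eq (n : ℕ) (hn : 1 ≤ n) : BSet n [0,0,1,1] = Gs n := by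
  ext w
  constructor
  · rintro ⟨hlen, hasc, hav1, hav2⟩
    have hne : w ≠ [] := by
      intro h; rw [h] at hlen; simp at hlen; omega
    have h0 : w.getD 0 0 = 0 := by rw [← headD_getD]; exact hasc.1 hne
    refine ⟨⟨hne, hasc, ?_, ?_⟩, hlen⟩
    · intro j k hjk hk hk0
      by_contra hc
      have hj0 : 0 < j := by
        rcases Nat.eq_zero_or_pos j with rfl | h
        · omega
        · exact h
      exact hav1 ((contains021_iff w).2 ⟨0, j, k, hj0, hjk, hk, by omega, by omega⟩)
    · rintro ⟨i, j, k, l, h1, h2, h3, h4, h5, h6, h7⟩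
      exact hav2 ((contains0011_iff w).2 ⟨i, j, k, l, h1, h2, h3, h4, h5, h6, h7⟩)
  · rintro ⟨⟨hne, hasc, hmono, hno⟩, hlen⟩
    refine ⟨hlen, hasc, ?_, ?_⟩
    · intro hc
      obtain ⟨i, j, k, h1, h2, h3, h4, h5⟩ := (contains021_iff w).1 hc
      have := hmono j k h2 h3 (by omega)
      omega
    · intro hc
      exact hno ((contains0011_iff w).1 hc)

/-- Ascent sequences of length `n ≥ 1` avoiding 021 and 0011 number `(n-1)·2^{n-2}+1`. -/
theorem card_avoid021_0011 (n : ℕ) (hn : 1 ≤ n) :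
    (BSet n [0,0,1,1]).ncard = (n - 1) * 2^(n - 2) + 1 := by
  rw [bset_eq n hn]
  exact Gs_card n hn
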